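/- Let d ≥ 2, r > 0, and let D = {(x_i, y_i)}_{i=1}^n ⊂ ℝ^d × {−1, +1} satisfy (x_i)_1 = y_i·r/2, with induced dataset D̃ (first coordinate removed) linearly separable with normalized max-ℓ2-margin solution θ̃ and margin γ̃ > 0, so that the normalized max-ℓ2-margin solution of D is θ̂ = (1/√(r² + 4γ̃²))·(r, 2γ̃·θ̃). Then for any r_test > 0 and σ > 0, the standard accuracy of θ̂ on data drawn from P_{r_test} equals Φ(r·r_test/(4σγ̃)), that is, P_{(X,Y)∼P_{r_test}}[Y·θ̂ᵀX > 0] = Φ(r·r_test/(4σγ̃)). -/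

import Mathlib

open MeasureTheory ProbabilityTheory Real Set
open scoped ENNReal BigOperators

noncomputable section

/-- Euclidean dot product on `Fin d → ℝ`. -/
def dot {d : ℕ} (u v : Fin d → ℝ) : ℝ := ∑ j, u j * v j

/-- Euclidean (`ℓ2`) norm on `Fin d → ℝ`. -/
def norm2 {d : ℕ} (u : Fin d → ℝ) : ℝ := Real.sqrt (∑ j, (u j) ^ 2)

/-- The (minimum) margin of the linear classifier `θ` on the dataset `{(x i, y i)}`. -/
def margin {d n : ℕ} (x : Fin n → Fin d → ℝ) (y : Fin n → ℝ) (θ : Fin d → ℝ) : ℝ :=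
  ⨅ i, y i * dot θ (x i)

/-- The isotropic Gaussian measure `N(0, σ² I_m)` on `ℝ^m`. -/
def gaussPi (m : ℕ) (σ : ℝ) : Measure (Fin m → ℝ) :=
  Measure.pi fun _ => gaussianReal 0 (Real.toNNReal (σ ^ 2))

/-- The data distribution `P_r` on `ℝ^{m+1} × {±1}`: the label `Y` is uniform on `{±1}`
and the covariate is `X = (Y · r/2, X̃)` with `X̃ ~ N(0, σ² I_m)`. -/
def Pdist (m : ℕ) (r σ : ℝ) : Measure ((Fin (m + 1) → ℝ) × ℝ) :=
  (2⁻¹ : ℝ≥0∞) • (gaussPi m σ).map (fun xt => ((Fin.cons (r / 2) xt : Fin (m + 1) → ℝ), (1 : ℝ)))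
    + (2⁻¹ : ℝ≥0∞) • (gaussPi m σ).map
        (fun xt => ((Fin.cons (-(r / 2)) xt : Fin (m + 1) → ℝ), (-1 : ℝ)))

/-- The standard normal cumulative distribution function `Φ`. -/
def stdGaussianCDF (z : ℝ) : ℝ := ((gaussianReal 0 1) (Iic z)).toReal

/-!
A test point has first coordinate `Y · r_test / 2`, so
`Y · θ̂ᵀX = c · (r · r_test / 2 + 2γ̃ · Y · θ̃ᵀX̃)` with `c > 0`. Since `‖θ̃‖ = 1`, `θ̃ᵀX̃` is
`N(0, σ²)` whatever the label, and by symmetry of the Gaussian both labels are classified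
correctly with probability `P(N(0, σ²) < r · r_test / (4γ̃)) = Φ(r · r_test / (4σγ̃))`.
-/

open scoped NNReal

lemma map_sum_pi_gaussianReal {ι : Type*} [Fintype ι] (μ : ι → ℝ) (v : ι → ℝ≥0) :
    (Measure.pi fun i => gaussianReal (μ i) (v i)).map (fun x => ∑ i, x i)
      = gaussianReal (∑ i, μ i) (∑ i, v i) := by
  refine Measure.ext_of_charFun (funext fun t => ?_)
  rw [charFun_map_sum_pi_eq_prod, Finset.prod_apply]
  simp only [charFun_gaussianReal, ← Complex.exp_sum]
  push_cast
  rw [Finset.sum_sub_distrib, ← Finset.sum_mul, ← Finset.mul_sum, ← Finset.sum_div,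
    ← Finset.sum_mul]

lemma map_weightedSum_pi_gaussianReal {ι : Type*} [Fintype ι] (a : ι → ℝ) (v : ℝ≥0) :
    (Measure.pi fun _ : ι => gaussianReal 0 v).map (fun x => ∑ i, a i * x i)
      = gaussianReal 0 ((∑ i, a i ^ 2).toNNReal * v) := by
  have hcomp : (fun x : ι → ℝ => ∑ i, a i * x i) = (fun x => ∑ i, x i) ∘ (fun x i => a i * x i) :=
    rfl
  rw [hcomp, ← Measure.map_map (by fun_prop) (by fun_prop),
    Measure.pi_map_pi fun i => by fun_prop]
  simp_rw [gaussianReal_map_const_mul, mul_zero]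
  rw [map_sum_pi_gaussianReal, Finset.sum_const_zero, ← Finset.sum_mul]
  congr
  ext
  simp [Real.coe_toNNReal _ (Finset.sum_nonneg fun i _ => sq_nonneg (a i))]

lemma gaussianReal_zero_Ioi_neg (v : ℝ≥0) (b : ℝ) :
    gaussianReal 0 v (Ioi (-b)) = gaussianReal 0 v (Iio b) := by
  conv_lhs =>
    rw [← neg_zero, ← gaussianReal_map_neg, Measure.map_apply measurable_neg measurableSet_Ioi]
  congr 1
  ext x
  simp

lemma gaussianReal_zero_sq_Iic {s : ℝ} (hs : 0 < s) (b : ℝ) :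
    gaussianReal 0 (s ^ 2).toNNReal (Iic b) = gaussianReal 0 1 (Iic (b / s)) := by
  have hmap : (gaussianReal 0 1).map (s * ·) = gaussianReal 0 (s ^ 2).toNNReal := by
    rw [gaussianReal_map_const_mul, mul_zero, mul_one, Real.toNNReal_of_nonneg (sq_nonneg s)]
  rw [← hmap, Measure.map_apply (by fun_prop) measurableSet_Iic]
  congr 1
  ext x
  simp [le_div_iff₀ hs, mul_comm]

lemma dot_cons {m : ℕ} (a t : ℝ) (w x : Fin m → ℝ) :
    dot (Fin.cons a w : Fin (m + 1) → ℝ) (Fin.cons t x) = a * t + dot w x := by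
  simp [dot, Fin.sum_univ_succ]

lemma dot_smul_left {d : ℕ} (c : ℝ) (u v : Fin d → ℝ) : dot (c • u) v = c * dot u v := by
  simp [dot, Finset.mul_sum, mul_assoc]

lemma norm2_smul {d : ℕ} (c : ℝ) (u : Fin d → ℝ) : norm2 (c • u) = |c| * norm2 u := by
  simp [norm2, mul_pow, ← Finset.mul_sum, Real.sqrt_mul (sq_nonneg c), Real.sqrt_sq_eq_abs]

lemma gaussPi_map_dot {m : ℕ} (σ : ℝ) (w : Fin m → ℝ) :
    (gaussPi m σ).map (dot w) = gaussianReal 0 ((norm2 w * σ) ^ 2).toNNReal := by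
  rw [gaussPi, show dot w = fun x => ∑ j, w j * x j from rfl, map_weightedSum_pi_gaussianReal,
    ← Real.toNNReal_mul (Finset.sum_nonneg fun j _ => sq_nonneg (w j)), mul_pow, norm2,
    Real.sq_sqrt (Finset.sum_nonneg fun j _ => sq_nonneg (w j))]

lemma Pdist_apply {m : ℕ} (r σ : ℝ) {S : Set ((Fin (m + 1) → ℝ) × ℝ)} (hS : MeasurableSet S) :
    Pdist m r σ S
      = 2⁻¹ * gaussPi m σ {x | ((Fin.cons (r / 2) x : Fin (m + 1) → ℝ), (1 : ℝ)) ∈ S}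
        + 2⁻¹ * gaussPi m σ {x | ((Fin.cons (-(r / 2)) x : Fin (m + 1) → ℝ), (-1 : ℝ)) ∈ S} := by
  rw [Pdist, Measure.add_apply, Measure.smul_apply, Measure.smul_apply,
    Measure.map_apply (by fun_prop) hS, Measure.map_apply (by fun_prop) hS]
  rfl

lemma measurableSet_setOf_pos_mul_dot {d : ℕ} (θ : Fin d → ℝ) :
    MeasurableSet {p : (Fin d → ℝ) × ℝ | 0 < p.2 * dot θ p.1} :=
  measurableSet_lt measurable_const (measurable_snd.mul (by unfold dot; fun_prop))

lemma Pdist_pos_mul_dot_cons {m : ℕ} (a r : ℝ) {σ : ℝ} (hσ : 0 < σ) {w : Fin m → ℝ}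
    (hw : 0 < norm2 w) :
    Pdist m r σ {p | 0 < p.2 * dot (Fin.cons a w) p.1}
      = gaussianReal 0 1 (Iic (a * r / (2 * (norm2 w * σ)))) := by
  have hlaw (A : Set ℝ) (hA : MeasurableSet A) :
      gaussPi m σ (dot w ⁻¹' A) = gaussianReal 0 ((norm2 w * σ) ^ 2).toNNReal A := by
    rw [← gaussPi_map_dot, Measure.map_apply (by unfold dot; fun_prop) hA]
  have hs : 0 < norm2 w * σ := mul_pos hw hσ
  have hv : ((norm2 w * σ) ^ 2).toNNReal ≠ 0 := by positivity
  have : NullSingletonClass (gaussianReal 0 _) := nullSingletonClass_gaussianReal hv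
  rw [Pdist_apply r σ (measurableSet_setOf_pos_mul_dot _)]
  simp only [mem_ofPred_eq, dot_cons, one_mul, neg_one_mul]
  have hpos : {x | 0 < a * (r / 2) + dot w x} = dot w ⁻¹' Ioi (-(a * r / 2)) := by
    ext x; simp only [mem_ofPred_eq, mem_preimage, mem_Ioi]; constructor <;> intro h <;> linarith
  have hneg : {x | 0 < -(a * -(r / 2) + dot w x)} = dot w ⁻¹' Iio (a * r / 2) := by
    ext x; simp only [mem_ofPred_eq, mem_preimage, mem_Iio]; constructor <;> intro h <;> linarith
  rw [hpos, hneg, hlaw _ measurableSet_Ioi, hlaw _ measurableSet_Iio, gaussianReal_zero_Ioi_neg,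
    measure_congr Iio_ae_eq_Iic, gaussianReal_zero_sq_Iic hs, ← add_mul,
    ENNReal.inv_two_add_inv_two, one_mul, div_div]

lemma setOf_pos_mul_dot_smul {d : ℕ} {c : ℝ} (hc : 0 < c) (θ : Fin d → ℝ) :
    {p : (Fin d → ℝ) × ℝ | 0 < p.2 * dot (c • θ) p.1} = {p | 0 < p.2 * dot θ p.1} := by
  ext p
  simp only [mem_ofPred_eq, dot_smul_left, mul_left_comm p.2 c, mul_pos_iff_of_pos_left hc]

theorem std_accuracy_max_margin_general
    {m : ℕ} (r rtest σ : ℝ)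
    (hσ : 0 < σ)
    (θt : Fin m → ℝ) (γt : ℝ)
    (hθt_norm : norm2 θt = 1)
    (hγt_pos : 0 < γt) :
    ∀ θhat : Fin (m + 1) → ℝ,
      θhat = (Real.sqrt (r ^ 2 + 4 * γt ^ 2))⁻¹ •
        (Fin.cons r ((2 * γt) • θt) : Fin (m + 1) → ℝ) →
      ((Pdist m rtest σ) {p | 0 < p.2 * dot θhat p.1}).toReal
        = stdGaussianCDF (r * rtest / (4 * σ * γt)) := by
  rintro θhat rfl
  have hnorm : norm2 ((2 * γt) • θt) = 2 * γt := by
    rw [norm2_smul, hθt_norm, mul_one, abs_of_pos (by positivity)]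
  rw [setOf_pos_mul_dot_smul (by positivity),
    Pdist_pos_mul_dot_cons r rtest hσ (by rw [hnorm]; positivity), hnorm, stdGaussianCDF]
  congr 3
  ring

/-- Lemma 1, second part. Under the hypotheses of Statement 0, the standard
accuracy of the max-`ℓ2`-margin solution `θ̂ = (1/√(r² + 4γ̃²)) • (r, 2γ̃ θ̃)` on test data from
`P_{r_test}` equals `Φ(r · r_test / (4σγ̃))`. -/
theorem std_accuracy_max_margin
    {m n : ℕ} (hm : 1 ≤ m) (hn : 0 < n) (r rtest σ : ℝ)
    (hr : 0 < r) (hrtest : 0 < rtest) (hσ : 0 < σ)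
    (x : Fin n → Fin (m + 1) → ℝ) (y : Fin n → ℝ)
    (hy : ∀ i, y i = 1 ∨ y i = -1)
    (hx1 : ∀ i, x i 0 = y i * (r / 2))
    (θt : Fin m → ℝ) (γt : ℝ)
    (hθt_norm : norm2 θt = 1)
    (hγt : γt = margin (fun i => Fin.tail (x i)) y θt)
    (hγt_pos : 0 < γt)
    (hθt_max : ∀ θ : Fin m → ℝ, norm2 θ ≤ 1 →
      margin (fun i => Fin.tail (x i)) y θ ≤ γt) :
    ∀ θhat : Fin (m + 1) → ℝ,
      θhat = (Real.sqrt (r ^ 2 + 4 * γt ^ 2))⁻¹ •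
        (Fin.cons r ((2 * γt) • θt) : Fin (m + 1) → ℝ) →
      ((Pdist m rtest σ) {p | 0 < p.2 * dot θhat p.1}).toReal
        = stdGaussianCDF (r * rtest / (4 * σ * γt)) :=
  std_accuracy_max_margin_general r rtest σ hσ θt γt hθt_norm hγt_pos

end
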